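/- arXiv:1408.1121 — 5 statements merged into one kernel-verified Lean document; each statement's English description precedes it below -/
import Mathlib

section
/- In an AUAI approximation system, (X ∩ Y)^{l2} = X^{l2} ∩ Y^{l2} for all subsets X, Y of S. -/
open Set

/-- AU-lower approximation: union of all cover elements included in `X`. -/
def AUlower {α : Type*} {n : ℕ} (K : Fin (n + 2) → Set α) (X : Set α) : Set α :=
  ⋃₀ {A | ∃ i : Fin (n + 2), A = K i ∧ K i ⊆ X}

/-- AU-upper approximation: intersection of all unions of cover elements covering `X`. -/
def AUupper {α : Type*} {n : ℕ} (K : Fin (n + 2) → Set α) (X : Set α) : Set α :=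
  ⋂₀ {A | ∃ I : Set (Fin (n + 2)), A = (⋃ i ∈ I, K i) ∧ X ⊆ A}

/-- AI-lower approximation: union of all intersections of complements included in `X`. -/
def AIlower {α : Type*} {n : ℕ} (K : Fin (n + 2) → Set α) (X : Set α) : Set α :=
  ⋃₀ {A | ∃ I : Set (Fin (n + 2)), A = (⋂ i ∈ I, (K i)ᶜ) ∧ A ⊆ X}

/-- AI-upper approximation: intersection of all complements of cover elements containing `X`. -/
def AIupper {α : Type*} {n : ℕ} (K : Fin (n + 2) → Set α) (X : Set α) : Set α :=
  ⋂₀ {A | ∃ i : Fin (n + 2), A = (K i)ᶜ ∧ X ⊆ (K i)ᶜ}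

theorem sUnion_sep_subset_inter_eq_inter {α : Type*} {F : Set (Set α)}
    (hF : ∀ A ∈ F, ∀ B ∈ F, A ∩ B ∈ F) (X Y : Set α) :
    ⋃₀ {A ∈ F | A ⊆ X ∩ Y} = ⋃₀ {A ∈ F | A ⊆ X} ∩ ⋃₀ {A ∈ F | A ⊆ Y} := by
  refine subset_antisymm (subset_inter ?_ ?_) ?_
  · exact sUnion_mono fun A hA => ⟨hA.1, hA.2.trans inter_subset_left⟩
  · exact sUnion_mono fun A hA => ⟨hA.1, hA.2.trans inter_subset_right⟩
  · rintro x ⟨⟨A, ⟨hAF, hAX⟩, hxA⟩, ⟨B, ⟨hBF, hBY⟩, hxB⟩⟩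
    exact ⟨A ∩ B, ⟨hF A hAF B hBF, inter_subset_inter hAX hBY⟩, hxA, hxB⟩

theorem inter_mem_range_biInter_compl {α ι : Type*} (K : ι → Set α) :
    ∀ A ∈ range (fun I : Set ι => ⋂ i ∈ I, (K i)ᶜ), ∀ B ∈ range (fun I : Set ι => ⋂ i ∈ I, (K i)ᶜ),
      A ∩ B ∈ range (fun I : Set ι => ⋂ i ∈ I, (K i)ᶜ) := by
  rintro _ ⟨I, rfl⟩ _ ⟨J, rfl⟩
  exact ⟨I ∪ J, biInter_union I J _⟩

theorem AIlower_eq_sUnion {α : Type*} {n : ℕ} (K : Fin (n + 2) → Set α) (X : Set α) :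
    AIlower K X = ⋃₀ {A ∈ range fun I : Set (Fin (n + 2)) => ⋂ i ∈ I, (K i)ᶜ | A ⊆ X} := by
  simp only [AIlower, mem_range, exists_and_right, eq_comm]

theorem stmt2_general {α : Type*} {n : ℕ} (K : Fin (n + 2) → Set α)
    (X Y : Set α) :
    AIlower K (X ∩ Y) = AIlower K X ∩ AIlower K Y := by
  simp only [AIlower_eq_sUnion]
  exact sUnion_sep_subset_inter_eq_inter (inter_mem_range_biInter_compl K) X Y

theorem stmt2 {α : Type*} {n : ℕ} (K : Fin (n + 2) → Set α)
    (hK0 : K 0 = ∅) (hKtop : K (Fin.last (n + 1)) = Set.univ) (X Y : Set α) :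
    AIlower K (X ∩ Y) = AIlower K X ∩ AIlower K Y :=
  stmt2_general K X Y
end

section
/- In an AUAI approximation system, (X ∪ Y)^{u1} = X^{u1} ∪ Y^{u1} for all subsets X, Y of S. -/
open Set

/-! The sets `⋃ i ∈ I, K i` form a family closed under binary unions, and for any such family
`𝓕` the map `X ↦ ⋂₀ {A ∈ 𝓕 | X ⊆ A}` preserves binary unions: a point outside the value at `X`
and at `Y` is missed by some `A ⊇ X` and `B ⊇ Y` in `𝓕`, hence by `A ∪ B ⊇ X ∪ Y`. -/

theorem Set.sInter_supersets_union {α : Type*} {𝓕 : Set (Set α)}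
    (h𝓕 : ∀ A ∈ 𝓕, ∀ B ∈ 𝓕, A ∪ B ∈ 𝓕) (X Y : Set α) :
    ⋂₀ {A ∈ 𝓕 | X ∪ Y ⊆ A} = ⋂₀ {A ∈ 𝓕 | X ⊆ A} ∪ ⋂₀ {A ∈ 𝓕 | Y ⊆ A} := by
  refine Subset.antisymm (fun x hx => ?_) ?_
  · by_contra hxXY
    simp only [mem_union, mem_sInter, mem_ofPred_eq, not_or, not_forall, exists_prop] at hxXY
    obtain ⟨⟨A, ⟨hA, hXA⟩, hxA⟩, ⟨B, ⟨hB, hYB⟩, hxB⟩⟩ := hxXY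
    exact not_or_intro hxA hxB (hx (A ∪ B) ⟨h𝓕 A hA B hB, union_subset_union hXA hYB⟩)
  · exact union_subset
      (sInter_subset_sInter fun A hA => ⟨hA.1, subset_union_left.trans hA.2⟩)
      (sInter_subset_sInter fun A hA => ⟨hA.1, subset_union_right.trans hA.2⟩)

theorem AUupper_eq_sInter {α : Type*} {n : ℕ} (K : Fin (n + 2) → Set α) (X : Set α) :
    AUupper K X = ⋂₀ {A ∈ range fun I : Set (Fin (n + 2)) => ⋃ i ∈ I, K i | X ⊆ A} := by
  simp only [AUupper, mem_range, eq_comm, exists_and_right]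

theorem union_mem_range_biUnion {α ι : Type*} (K : ι → Set α) :
    ∀ A ∈ range (fun I : Set ι => ⋃ i ∈ I, K i), ∀ B ∈ range (fun I : Set ι => ⋃ i ∈ I, K i),
      A ∪ B ∈ range (fun I : Set ι => ⋃ i ∈ I, K i) := by
  rintro _ ⟨I, rfl⟩ _ ⟨J, rfl⟩
  exact ⟨I ∪ J, biUnion_union I J K⟩

theorem stmt3_general {α : Type*} {n : ℕ} (K : Fin (n + 2) → Set α)
    (X Y : Set α) :
    AUupper K (X ∪ Y) = AUupper K X ∪ AUupper K Y := by
  simp only [AUupper_eq_sInter]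
  exact sInter_supersets_union (union_mem_range_biUnion K) X Y

theorem stmt3 {α : Type*} {n : ℕ} (K : Fin (n + 2) → Set α)
    (hK0 : K 0 = ∅) (hKtop : K (Fin.last (n + 1)) = Set.univ) (X Y : Set α) :
    AUupper K (X ∪ Y) = AUupper K X ∪ AUupper K Y :=
  stmt3_general K X Y
end

section
/- In an AUAI approximation system, if the K_i are pairwise disjoint, then (X ∩ Y)^{l1} = X^{l1} ∩ Y^{l1} and (X ∪ Y)^{u2} = X^{u2} ∪ Y^{u2} for all X, Y ⊆ S. -/
/-! Two blocks of a *laminar* family are either disjoint or nested. Then a point lying in a block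
inside `X` and in a block inside `Y` lies in the smaller of the two, which is inside `X ∩ Y`; so
`AUlower` distributes over `∩`. Since `AIupper K X` is the complement of `AUlower K Xᶜ`, De Morgan
turns this into distributivity of `AIupper` over `∪`. The given family is laminar because its
blocks other than `K 0 = ∅` and `K (last) = univ` are pairwise disjoint. -/

open Set

def IsLaminar {α ι : Type*} (K : ι → Set α) : Prop :=
  ∀ i j, (K i ∩ K j).Nonempty → K i ⊆ K j ∨ K j ⊆ K i

section

variable {α : Type*} {n : ℕ} {K : Fin (n + 2) → Set α} {X Y : Set α} {x : α}

theorem mem_AUlower : x ∈ AUlower K X ↔ ∃ i, K i ⊆ X ∧ x ∈ K i := by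
  simp only [AUlower, mem_sUnion, mem_ofPred_eq]
  constructor
  · rintro ⟨_, ⟨i, rfl, hi⟩, hx⟩
    exact ⟨i, hi, hx⟩
  · rintro ⟨i, hi, hx⟩
    exact ⟨K i, ⟨i, rfl, hi⟩, hx⟩

theorem AIupper_eq_compl_AUlower_compl : AIupper K X = (AUlower K Xᶜ)ᶜ := by
  ext x
  simp only [AIupper, mem_sInter, mem_ofPred_eq, mem_compl_iff, mem_AUlower, not_exists, not_and]
  constructor
  · rintro h i hi hx
    exact h _ ⟨i, rfl, subset_compl_comm.mp hi⟩ hx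
  · rintro h _ ⟨i, rfl, hi⟩ hx
    exact h i (subset_compl_comm.mp hi) hx

theorem AUlower_inter (hK : IsLaminar K) :
    AUlower K (X ∩ Y) = AUlower K X ∩ AUlower K Y := by
  ext x
  simp only [mem_inter_iff, mem_AUlower, subset_inter_iff]
  constructor
  · rintro ⟨i, ⟨hiX, hiY⟩, hx⟩
    exact ⟨⟨i, hiX, hx⟩, ⟨i, hiY, hx⟩⟩
  · rintro ⟨⟨i, hiX, hxi⟩, ⟨j, hjY, hxj⟩⟩
    rcases hK i j ⟨x, hxi, hxj⟩ with hij | hji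
    · exact ⟨i, ⟨hiX, hij.trans hjY⟩, hxi⟩
    · exact ⟨j, ⟨hji.trans hiX, hjY⟩, hxj⟩

theorem AIupper_union (hK : IsLaminar K) :
    AIupper K (X ∪ Y) = AIupper K X ∪ AIupper K Y := by
  simp only [AIupper_eq_compl_AUlower_compl, compl_union, AUlower_inter hK, compl_inter]

theorem isLaminar_of_disjoint_of_bot_of_top (hK0 : K 0 = ∅) (hKtop : K (Fin.last (n + 1)) = univ)
    (hdisj : ∀ i j : Fin (n + 2), i ≠ 0 → i ≠ Fin.last (n + 1) →
      j ≠ 0 → j ≠ Fin.last (n + 1) → i ≠ j → K i ∩ K j = ∅) :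
    IsLaminar K := by
  rintro i j ⟨x, hxi, hxj⟩
  by_cases hij : i = j
  · exact .inl (hij ▸ subset_rfl)
  have hi0 : i ≠ 0 := by rintro rfl; simp [hK0] at hxi
  have hj0 : j ≠ 0 := by rintro rfl; simp [hK0] at hxj
  by_cases hi : i = Fin.last (n + 1)
  · exact .inr (hi ▸ hKtop ▸ subset_univ _)
  by_cases hj : j = Fin.last (n + 1)
  · exact .inl (hj ▸ hKtop ▸ subset_univ _)
  have hx : x ∈ K i ∩ K j := ⟨hxi, hxj⟩
  simp [hdisj i j hi0 hi hj0 hj hij] at hx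

end

theorem stmt6 {α : Type*} {n : ℕ} (K : Fin (n + 2) → Set α)
    (hK0 : K 0 = ∅) (hKtop : K (Fin.last (n + 1)) = Set.univ)
    (hdisj : ∀ i j : Fin (n + 2), i ≠ 0 → i ≠ Fin.last (n + 1) →
      j ≠ 0 → j ≠ Fin.last (n + 1) → i ≠ j → K i ∩ K j = ∅)
    (X Y : Set α) :
    AUlower K (X ∩ Y) = AUlower K X ∩ AUlower K Y ∧
      AIupper K (X ∪ Y) = AIupper K X ∪ AIupper K Y := by
  have hK : IsLaminar K := isLaminar_of_disjoint_of_bot_of_top hK0 hKtop hdisj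
  exact ⟨AUlower_inter hK, AIupper_union hK⟩
end

section
/- For a reflexive binary relation T on a set S and the neighborhood approximations A^{l*} = {x : ∃y, (x,y) ∈ T and [y]_T ⊆ A} and A^{u*} = {x : ∀y, (x,y) ∈ T → [y]_T ∩ A ≠ ∅}, one has A^l ⊆ A^{l*} ⊆ A ⊆ A^{u*} ⊆ A^u for every A ⊆ S, where A^l = ⋃{[x]_T : [x]_T ⊆ A} and A^u = ⋃{[x]_T : [x]_T ∩ A ≠ ∅, x ∈ A}. -/
open Set

/-- The tolerance neighbourhood `[x]_T`. -/
def tcls {α : Type*} (T : α → α → Prop) (x : α) : Set α := {y | T x y}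

/-- Lower approximation `A^l = ⋃{[x]_T : [x]_T ⊆ A}`. -/
def tlow {α : Type*} (T : α → α → Prop) (A : Set α) : Set α :=
  ⋃₀ {B | ∃ x, B = tcls T x ∧ tcls T x ⊆ A}

/-- Upper approximation `A^u = ⋃{[x]_T : [x]_T ∩ A ≠ ∅, x ∈ A}`. -/
def tupp {α : Type*} (T : α → α → Prop) (A : Set α) : Set α :=
  ⋃₀ {B | ∃ x ∈ A, B = tcls T x ∧ (tcls T x ∩ A).Nonempty}

/-- `A^{l*} = {x : ∃ y, (x,y) ∈ T ∧ [y]_T ⊆ A}`. -/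
def tlowStar {α : Type*} (T : α → α → Prop) (A : Set α) : Set α :=
  {x | ∃ y, T x y ∧ tcls T y ⊆ A}

/-- `A^{u*} = {x : ∀ y, (x,y) ∈ T → [y]_T ∩ A ≠ ∅}`. -/
def tuppStar {α : Type*} (T : α → α → Prop) (A : Set α) : Set α :=
  {x | ∀ y, T x y → (tcls T y ∩ A).Nonempty}

section Tolerance

variable {α : Type*} {T : α → α → Prop} {A : Set α}

theorem mem_tcls_comm (hsymm : Symmetric T) {x y : α} : y ∈ tcls T x ↔ x ∈ tcls T y :=
  ⟨fun h => hsymm h, fun h => hsymm h⟩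

theorem mem_tcls_self (hrefl : Reflexive T) (x : α) : x ∈ tcls T x :=
  hrefl x

theorem tlow_subset_tlowStar (hsymm : Symmetric T) : tlow T A ⊆ tlowStar T A := by
  rintro x ⟨_, ⟨z, rfl, hzA⟩, hx⟩
  exact ⟨z, (mem_tcls_comm hsymm).1 hx, hzA⟩

theorem tlowStar_subset (hsymm : Symmetric T) : tlowStar T A ⊆ A := by
  rintro x ⟨_, hxy, hyA⟩
  exact hyA ((mem_tcls_comm hsymm).1 hxy)

theorem subset_tuppStar (hsymm : Symmetric T) : A ⊆ tuppStar T A :=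
  fun x hx _ hxy => ⟨x, (mem_tcls_comm hsymm).1 hxy, hx⟩

theorem tuppStar_subset_tupp (hrefl : Reflexive T) (hsymm : Symmetric T) :
    tuppStar T A ⊆ tupp T A := by
  intro x hx
  obtain ⟨a, hxa, haA⟩ := hx x (mem_tcls_self hrefl x)
  exact ⟨tcls T a, ⟨a, haA, rfl, a, mem_tcls_self hrefl a, haA⟩, (mem_tcls_comm hsymm).1 hxa⟩

end Tolerance

theorem stmt7 {α : Type*} (T : α → α → Prop)
    (hrefl : Reflexive T) (hsymm : Symmetric T) (A : Set α) :
    tlow T A ⊆ tlowStar T A ∧ tlowStar T A ⊆ A ∧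
      A ⊆ tuppStar T A ∧ tuppStar T A ⊆ tupp T A :=
  ⟨tlow_subset_tlowStar hsymm, tlowStar_subset hsymm, subset_tuppStar hsymm,
    tuppStar_subset_tupp hrefl hsymm⟩
end

section
/- For a binary relation R on S, the condition that A^l ⊆ A ⊆ A^u holds for every subset A (where A^l = ⋃{[x] : [x] ⊆ A, x ∈ A} and A^u = ⋃{[x] : [x] ∩ A ≠ ∅, x ∈ A}, with [x] = {y : (x,y) ∈ R}) is equivalent to reflexivity of R. -/
open Set

/-- The set of `R`-relateds of `x`. -/
def rcls {α : Type*} (R : α → α → Prop) (x : α) : Set α := {y | R x y}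

/-- `A^l = ⋃{[x] : x ∈ A, [x] ⊆ A}`. -/
def rlow {α : Type*} (R : α → α → Prop) (A : Set α) : Set α :=
  ⋃₀ {B | ∃ x ∈ A, B = rcls R x ∧ rcls R x ⊆ A}

/-- `A^u = ⋃{[x] : x ∈ A, [x] ∩ A ≠ ∅}`. -/
def rupp {α : Type*} (R : α → α → Prop) (A : Set α) : Set α :=
  ⋃₀ {B | ∃ x ∈ A, B = rcls R x ∧ (rcls R x ∩ A).Nonempty}

section

variable {α : Type*} (R : α → α → Prop)

theorem rlow_subset (A : Set α) : rlow R A ⊆ A := by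
  rintro y ⟨_, ⟨x, -, rfl, hxA⟩, hy⟩
  exact hxA hy

theorem mem_rupp_iff {A : Set α} {y : α} :
    y ∈ rupp R A ↔ ∃ x ∈ A, R x y ∧ ∃ z ∈ A, R x z := by
  constructor
  · rintro ⟨_, ⟨x, hx, rfl, z, hxz, hz⟩, hy⟩
    exact ⟨x, hx, hy, z, hz, hxz⟩
  · rintro ⟨x, hx, hxy, z, hz, hxz⟩
    exact ⟨rcls R x, ⟨x, hx, rfl, z, hxz, hz⟩, hxy⟩

theorem mem_rupp_singleton {x y : α} : y ∈ rupp R {x} ↔ R x x ∧ R x y := by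
  simp only [mem_rupp_iff, mem_singleton_iff, exists_eq_left]
  exact and_comm

variable {R}

theorem subset_rupp_of_refl (hR : ∀ x, R x x) (A : Set α) : A ⊆ rupp R A :=
  fun x hx => (mem_rupp_iff R).2 ⟨x, hx, hR x, x, hx, hR x⟩

end

theorem stmt8 {α : Type*} (R : α → α → Prop) :
    (∀ A : Set α, rlow R A ⊆ A ∧ A ⊆ rupp R A) ↔ Reflexive R := by
  constructor
  · intro h x
    exact ((mem_rupp_singleton R).1 ((h {x}).2 rfl)).1
  · intro hR A
    exact ⟨rlow_subset R A, subset_rupp_of_refl hR A⟩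
end
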